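/- Let a > 0, let c : ℝⁿ → ℝ be twice continuously differentiable, let U ⊆ ℝ × ℝⁿ be a set, and let v : ℝ × ℝⁿ → ℝ be twice continuously differentiable and satisfy the transformed wave equation ∂²v/∂y₀² − a²·∑_{j=1}^{n}[∂²v/∂y_j² + 2·c_j(y)·∂²v/∂y₀∂y_j + c_j(y)²·∂²v/∂y₀² + c_{jj}(y)·∂v/∂y₀] = 0 at every point of U, where c_j = ∂c/∂y_j and c_{jj} = ∂²c/∂y_j². Then the function u(x₀, x) = v(x₀ + c(x), x) satisfies the wave equation ∂²u/∂x₀² − a²·∑_{j=1}^{n} ∂²u/∂x_j² = 0 at every point (x₀, x) such that (x₀ + c(x), x) ∈ U. -/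

import Mathlib

/-!
Along a curve `γ`, the chain rule gives `(f ∘ γ)'' = D²f(γ)(γ', γ') + Df(γ) γ''`, which
reduces every second partial derivative in the statement to `D²v` or `D²c`. For
`u(x₀, x) = v(x₀ + c x, x)` the relevant curve is `s ↦ (x₀ + c(x + s eⱼ), x + s eⱼ)`, with
velocity `cⱼ τ + eⱼ` and acceleration `cⱼⱼ τ` (`τ` the time direction), so expanding
`D²v(cⱼ τ + eⱼ, cⱼ τ + eⱼ)` by the symmetry of `D²v` turns `∂²u/∂xⱼ²` into the `j`-th summand
of the transformed operator. In time, `u` is a translate of `v`, so `∂²u/∂x₀² = ∂²v/∂y₀²`.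
-/

/-- Partial derivative of `v : ℝ × ℝⁿ → ℝ` with respect to the time variable. -/
noncomputable def pT {n : ℕ} (v : ℝ × (Fin n → ℝ) → ℝ) (p : ℝ × (Fin n → ℝ)) : ℝ :=
  deriv (fun t => v (t, p.2)) p.1

/-- Partial derivative of `v : ℝ × ℝⁿ → ℝ` with respect to the `j`-th spatial variable. -/
noncomputable def pS {n : ℕ} (j : Fin n) (v : ℝ × (Fin n → ℝ) → ℝ)
    (p : ℝ × (Fin n → ℝ)) : ℝ :=
  deriv (fun s => v (p.1, Function.update p.2 j s)) (p.2 j)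

/-- Partial derivative of `f : ℝⁿ → ℝ` with respect to the `j`-th variable. -/
noncomputable def pD {n : ℕ} (j : Fin n) (f : (Fin n → ℝ) → ℝ) (x : Fin n → ℝ) : ℝ :=
  deriv (fun s => f (Function.update x j s)) (x j)

section CurveCalculus

variable {E F : Type*} [NormedAddCommGroup E] [NormedSpace ℝ E]
  [NormedAddCommGroup F] [NormedSpace ℝ F] {f : E → F} {γ γ' w : ℝ → E} {d γ'' w' : E} {s : ℝ}

theorem ContDiff.differentiable_fderiv {k : WithTop ℕ∞} (hf : ContDiff ℝ k f) (hk : 2 ≤ k) :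
    Differentiable ℝ (fderiv ℝ f) :=
  (hf.fderiv_right (m := 1) hk).differentiable one_ne_zero

theorem hasDerivAt_fderiv_apply_comp (hf' : DifferentiableAt ℝ (fderiv ℝ f) (γ s))
    (hγ : HasDerivAt γ d s) (hw : HasDerivAt w w' s) :
    HasDerivAt (fun s => fderiv ℝ f (γ s) (w s))
      (fderiv ℝ (fderiv ℝ f) (γ s) d (w s) + fderiv ℝ f (γ s) w') s :=
  (hf'.hasFDerivAt.comp_hasDerivAt s hγ).clm_apply hw

theorem deriv_deriv_comp_eq (hf : Differentiable ℝ f)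
    (hf' : DifferentiableAt ℝ (fderiv ℝ f) (γ s))
    (hγ : ∀ s, HasDerivAt γ (γ' s) s) (hγ' : HasDerivAt γ' γ'' s) :
    deriv (fun s => deriv (fun s => f (γ s)) s) s
      = fderiv ℝ (fderiv ℝ f) (γ s) (γ' s) (γ' s) + fderiv ℝ f (γ s) γ'' := by
  have hfirst : (fun s => deriv (fun s => f (γ s)) s) = fun s => fderiv ℝ f (γ s) (γ' s) :=
    funext fun s => ((hf _).hasFDerivAt.comp_hasDerivAt s (hγ s)).deriv
  rw [hfirst]
  exact (hasDerivAt_fderiv_apply_comp hf' (hγ s) hγ').deriv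

end CurveCalculus

section PartialDerivatives

variable {n : ℕ}

theorem hasDerivAt_timeLine (y : Fin n → ℝ) (t : ℝ) :
    HasDerivAt (fun t : ℝ => (t, y)) ((1 : ℝ), (0 : Fin n → ℝ)) t :=
  (hasDerivAt_id t).prodMk (hasDerivAt_const t y)

theorem hasDerivAt_coordLine (t : ℝ) (y : Fin n → ℝ) (j : Fin n) (s : ℝ) :
    HasDerivAt (fun s : ℝ => (t, Function.update y j s)) ((0 : ℝ), Pi.single j (1 : ℝ)) s :=
  (hasDerivAt_const s t).prodMk (hasDerivAt_update y j s)

theorem pT_eq_fderiv {v : ℝ × (Fin n → ℝ) → ℝ} (hv : Differentiable ℝ v)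
    (p : ℝ × (Fin n → ℝ)) : pT v p = fderiv ℝ v p (1, 0) :=
  ((hv p).hasFDerivAt.comp_hasDerivAt p.1 (hasDerivAt_timeLine p.2 p.1)).deriv

theorem pS_eq_fderiv {v : ℝ × (Fin n → ℝ) → ℝ} (hv : Differentiable ℝ v) (j : Fin n)
    (p : ℝ × (Fin n → ℝ)) : pS j v p = fderiv ℝ v p (0, Pi.single j 1) := by
  simpa [pS, Function.comp_def] using ((hv _).hasFDerivAt.comp_hasDerivAt (p.2 j)
    (hasDerivAt_coordLine p.1 p.2 j (p.2 j))).deriv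

theorem pD_eq_fderiv {c : (Fin n → ℝ) → ℝ} (hc : Differentiable ℝ c) (j : Fin n)
    (x : Fin n → ℝ) : pD j c x = fderiv ℝ c x (Pi.single j 1) := by
  simpa [pD, Function.comp_def] using
    ((hc _).hasFDerivAt.comp_hasDerivAt (x j) (hasDerivAt_update x j (x j))).deriv

theorem pS_pS_eq_deriv_deriv (v : ℝ × (Fin n → ℝ) → ℝ) (j : Fin n) (t : ℝ) (x : Fin n → ℝ) :
    pS j (pS j v) (t, x)
      = deriv (fun s => deriv (fun s' => v (t, Function.update x j s')) s) (x j) := by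
  simp [pS, Function.update_idem]

theorem pD_pD_eq_deriv_deriv (c : (Fin n → ℝ) → ℝ) (j : Fin n) (x : Fin n → ℝ) :
    pD j (pD j c) x = deriv (fun s => deriv (fun s' => c (Function.update x j s')) s) (x j) := by
  simp [pD, Function.update_idem]

end PartialDerivatives

section SecondPartials

variable {n : ℕ} {v : ℝ × (Fin n → ℝ) → ℝ} {c : (Fin n → ℝ) → ℝ}

theorem pT_pT_eq_fderiv_fderiv (hv : Differentiable ℝ v) (hv' : Differentiable ℝ (fderiv ℝ v))
    (p : ℝ × (Fin n → ℝ)) : pT (pT v) p = fderiv ℝ (fderiv ℝ v) p (1, 0) (1, 0) := by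
  simpa [pT] using
    deriv_deriv_comp_eq hv (hv' _) (hasDerivAt_timeLine p.2) (hasDerivAt_const _ _)

theorem pT_pS_eq_fderiv_fderiv (hv : Differentiable ℝ v) (hv' : Differentiable ℝ (fderiv ℝ v))
    (j : Fin n) (p : ℝ × (Fin n → ℝ)) :
    pT (pS j v) p = fderiv ℝ (fderiv ℝ v) p (1, 0) (0, Pi.single j 1) := by
  simp only [pT, pS_eq_fderiv hv]
  simpa using (hasDerivAt_fderiv_apply_comp (hv' _) (hasDerivAt_timeLine p.2 p.1)
    (hasDerivAt_const _ _)).deriv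

theorem pS_pS_eq_fderiv_fderiv (hv : Differentiable ℝ v) (hv' : Differentiable ℝ (fderiv ℝ v))
    (j : Fin n) (p : ℝ × (Fin n → ℝ)) :
    pS j (pS j v) p = fderiv ℝ (fderiv ℝ v) p (0, Pi.single j 1) (0, Pi.single j 1) := by
  rw [pS_pS_eq_deriv_deriv]
  simpa using deriv_deriv_comp_eq (s := p.2 j) hv (hv' _) (hasDerivAt_coordLine p.1 p.2 j)
    (hasDerivAt_const _ _)

theorem pD_pD_eq_fderiv_fderiv (hc : Differentiable ℝ c) (hc' : Differentiable ℝ (fderiv ℝ c))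
    (j : Fin n) (x : Fin n → ℝ) :
    pD j (pD j c) x = fderiv ℝ (fderiv ℝ c) x (Pi.single j 1) (Pi.single j 1) := by
  rw [pD_pD_eq_deriv_deriv]
  simpa using deriv_deriv_comp_eq (s := x j) hc (hc' _) (hasDerivAt_update x j)
    (hasDerivAt_const _ _)

end SecondPartials

section TimeShift

variable {n : ℕ} (v : ℝ × (Fin n → ℝ) → ℝ) (c : (Fin n → ℝ) → ℝ)

theorem pT_comp_timeShift (q : ℝ × (Fin n → ℝ)) :
    pT (fun q => v (q.1 + c q.2, q.2)) q = pT v (q.1 + c q.2, q.2) :=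
  deriv_comp_add_const (fun t => v (t, q.2)) (c q.2) q.1

theorem pT_pT_comp_timeShift (q : ℝ × (Fin n → ℝ)) :
    pT (pT (fun q => v (q.1 + c q.2, q.2))) q = pT (pT v) (q.1 + c q.2, q.2) := by
  rw [funext (pT_comp_timeShift v c)]
  exact pT_comp_timeShift (pT v) c q

variable {v c}

theorem pS_pS_comp_timeShift (hv : Differentiable ℝ v) (hv' : Differentiable ℝ (fderiv ℝ v))
    (hc : Differentiable ℝ c) (hc' : Differentiable ℝ (fderiv ℝ c))
    (j : Fin n) (x₀ : ℝ) (x : Fin n → ℝ) :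
    pS j (pS j (fun q => v (q.1 + c q.2, q.2))) (x₀, x)
      = pS j (pS j v) (x₀ + c x, x)
        + 2 * pD j c x * pT (pS j v) (x₀ + c x, x)
        + pD j c x ^ 2 * pT (pT v) (x₀ + c x, x)
        + pD j (pD j c) x * pT v (x₀ + c x, x) := by
  rw [pS_pS_eq_deriv_deriv, pS_pS_eq_fderiv_fderiv hv hv', pT_pS_eq_fderiv_fderiv hv hv',
    pT_pT_eq_fderiv_fderiv hv hv', pT_eq_fderiv hv, pD_eq_fderiv hc, pD_pD_eq_fderiv_fderiv hc hc']
  set e : Fin n → ℝ := Pi.single j 1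
  set r := fderiv ℝ c x e
  have hγ : ∀ s, HasDerivAt (fun s => (x₀ + c (Function.update x j s), Function.update x j s))
      (fderiv ℝ c (Function.update x j s) e, e) s := fun s =>
    (((hc _).hasFDerivAt.comp_hasDerivAt s (hasDerivAt_update x j s)).const_add x₀).prodMk
      (hasDerivAt_update x j s)
  have hγ' : HasDerivAt (fun s => (fderiv ℝ c (Function.update x j s) e, e))
      (fderiv ℝ (fderiv ℝ c) x e e, 0) (x j) := by
    simpa using (hasDerivAt_fderiv_apply_comp (hc' _) (hasDerivAt_update x j (x j))
      (hasDerivAt_const _ e)).prodMk (hasDerivAt_const (x j) e)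
  have hchain := deriv_deriv_comp_eq hv (hv' _) hγ hγ'
  simp only [Function.update_eq_self] at hchain
  set Q : ℝ × (Fin n → ℝ) := (x₀ + c x, x)
  set B := fderiv ℝ (fderiv ℝ v) Q
  have hsym : B (0, e) (1, 0) = B (1, 0) (0, e) :=
    second_derivative_symmetric (fun y => (hv y).hasFDerivAt) (hv' Q).hasFDerivAt _ _
  have hsplit : ((r, e) : ℝ × (Fin n → ℝ)) = r • (1, 0) + (0, e) := by simp
  have htime : ((fderiv ℝ (fderiv ℝ c) x e e, 0) : ℝ × (Fin n → ℝ))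
      = fderiv ℝ (fderiv ℝ c) x e e • (1, 0) := by simp
  rw [hchain, hsplit, htime]
  simp only [map_add, map_smul, add_apply, smul_apply, smul_eq_mul, hsym]
  ring

end TimeShift

theorem solution_transport_general (n : ℕ) (a : ℝ)
    (c : (Fin n → ℝ) → ℝ) (hc : ContDiff ℝ 2 c)
    (U : Set (ℝ × (Fin n → ℝ)))
    (v : ℝ × (Fin n → ℝ) → ℝ) (hv : ContDiff ℝ 2 v)
    (hveq : ∀ q ∈ U,
      pT (pT v) q
        - a ^ 2 * ∑ j,
            (pS j (pS j v) q
              + 2 * pD j c q.2 * pT (pS j v) q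
              + (pD j c q.2) ^ 2 * pT (pT v) q
              + pD j (pD j c) q.2 * pT v q) = 0) :
    ∀ (x₀ : ℝ) (x : Fin n → ℝ), (x₀ + c x, x) ∈ U →
      pT (pT (fun q => v (q.1 + c q.2, q.2))) (x₀, x)
        - a ^ 2 * ∑ j, pS j (pS j (fun q => v (q.1 + c q.2, q.2))) (x₀, x) = 0 := by
  intro x₀ x hU
  have hv₁ := hv.differentiable two_ne_zero
  have hc₁ := hc.differentiable two_ne_zero
  have hv₂ := hv.differentiable_fderiv le_rfl
  have hc₂ := hc.differentiable_fderiv le_rfl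
  rw [pT_pT_comp_timeShift,
    Finset.sum_congr rfl fun j _ => pS_pS_comp_timeShift hv₁ hv₂ hc₁ hc₂ j x₀ x]
  exact hveq _ hU

/-- If `v` is `C²` and satisfies the expanded transformed wave
equation at every point of `U`, then `u(x₀,x) = v(x₀ + c x, x)` satisfies the wave
equation `∂²u/∂x₀² − a²∑ⱼ ∂²u/∂xⱼ² = 0` at every `(x₀,x)` with `(x₀ + c x, x) ∈ U`. -/
theorem solution_transport (n : ℕ) (a : ℝ) (ha : 0 < a)
    (c : (Fin n → ℝ) → ℝ) (hc : ContDiff ℝ 2 c)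
    (U : Set (ℝ × (Fin n → ℝ)))
    (v : ℝ × (Fin n → ℝ) → ℝ) (hv : ContDiff ℝ 2 v)
    (hveq : ∀ q ∈ U,
      pT (pT v) q
        - a ^ 2 * ∑ j,
            (pS j (pS j v) q
              + 2 * pD j c q.2 * pT (pS j v) q
              + (pD j c q.2) ^ 2 * pT (pT v) q
              + pD j (pD j c) q.2 * pT v q) = 0) :
    ∀ (x₀ : ℝ) (x : Fin n → ℝ), (x₀ + c x, x) ∈ U →
      pT (pT (fun q => v (q.1 + c q.2, q.2))) (x₀, x)
        - a ^ 2 * ∑ j, pS j (pS j (fun q => v (q.1 + c q.2, q.2))) (x₀, x) = 0 :=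
  solution_transport_general n a c hc U v hv hveq
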